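/- arXiv:1305.7106 — 3 statements merged into one kernel-verified Lean document; each statement's English description precedes it below -/
import Mathlib

section
/- Let Λ be a finite measure on (0,1], ν(dx) = x⁻²Λ(dx), and for n ≥ 2 define δ(n) := -n ∫₀¹ log(1 - (1/n)[nx - 1 + (1-x)ⁿ]) ν(dx) and λ_{n,k} := ∫₀¹ x^k (1-x)^{n-k} x⁻² Λ(dx). Then δ(n)/n ≤ ∑_{k=2}^{n} (-log((n-k+1)/n)) C(n,k) λ_{n,k}. -/
open MeasureTheory Real Set Finset
open scoped ENNReal

/-!
With `w_k(x) = C(n,k) x^k (1-x)^(n-k)` the binomial weights, the argument of the logarithm is the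
mean `∑ w_k(x) Y_k / n`, where `Y_k = n - k + 1` for `k ≥ 1` and `Y_0 = n`; this follows from the
Bernstein identities `∑ w_k = 1` and `∑ k w_k = n x`. Jensen's inequality for the convex function
`-log` bounds `-log` of the mean by `∑ w_k (-log (Y_k / n))`, whose terms with `k ≤ 1` vanish.
Dividing by `x²` and integrating against `Λ` gives the claim.
-/

section Bernstein

variable (n : ℕ)

lemma bernsteinPolynomial_eval (x : ℝ) (k : ℕ) :
    (bernsteinPolynomial ℝ n k).eval x = n.choose k * x ^ k * (1 - x) ^ (n - k) := by
  simp [bernsteinPolynomial]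

lemma bernsteinPolynomial_eval_nonneg {x : ℝ} (hx : x ∈ Set.Icc 0 1) (k : ℕ) :
    0 ≤ (bernsteinPolynomial ℝ n k).eval x := by
  obtain ⟨hx0, hx1⟩ := hx
  have : 0 ≤ 1 - x := by linarith
  rw [bernsteinPolynomial_eval]
  positivity

lemma sum_bernsteinPolynomial_eval (x : ℝ) :
    ∑ k ∈ range (n + 1), (bernsteinPolynomial ℝ n k).eval x = 1 := by
  simpa [Polynomial.eval_finsetSum] using
    congrArg (Polynomial.eval x) (bernsteinPolynomial.sum ℝ n)

lemma sum_mul_bernsteinPolynomial_eval (x : ℝ) :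
    ∑ k ∈ range (n + 1), (k : ℝ) * (bernsteinPolynomial ℝ n k).eval x = n * x := by
  simpa [Polynomial.eval_finsetSum, nsmul_eq_mul] using
    congrArg (Polynomial.eval x) (bernsteinPolynomial.sum_smul ℝ n)

end Bernstein

/-- `Y_k`: a merger of `k` of `n` blocks leaves `n - k + 1` blocks, and `k ≤ 1` is no merger. -/
def blocksAfterMerger (n k : ℕ) : ℕ := min n (n + 1 - k)

lemma cast_blocksAfterMerger {n k : ℕ} (hk : k ≤ n) :
    (blocksAfterMerger n k : ℝ) = n + 1 - k - if k = 0 then 1 else 0 := by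
  unfold blocksAfterMerger
  split_ifs with h
  · subst h; simp
  · rw [min_eq_right (by omega), Nat.cast_sub (by omega)]; push_cast; ring

lemma sum_bernsteinPolynomial_eval_mul_blocksAfterMerger (n : ℕ) (x : ℝ) :
    ∑ k ∈ range (n + 1), (bernsteinPolynomial ℝ n k).eval x * blocksAfterMerger n k
      = n + 1 - n * x - (1 - x) ^ n := by
  have hY : ∀ k ∈ range (n + 1), (bernsteinPolynomial ℝ n k).eval x * blocksAfterMerger n k
      = (n + 1) * (bernsteinPolynomial ℝ n k).eval x - k * (bernsteinPolynomial ℝ n k).eval x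
        - if k = 0 then (bernsteinPolynomial ℝ n k).eval x else 0 := by
    intro k hk
    rw [cast_blocksAfterMerger (Nat.lt_succ_iff.mp (mem_range.mp hk))]
    split_ifs <;> ring
  rw [sum_congr rfl hY, sum_sub_distrib, sum_sub_distrib, ← mul_sum, sum_ite_eq',
    sum_bernsteinPolynomial_eval, sum_mul_bernsteinPolynomial_eval, if_pos (by simp),
    bernsteinPolynomial_eval]
  simp

lemma neg_log_le_sum_bernsteinPolynomial_eval_mul {n : ℕ} (hn : 1 ≤ n) {x : ℝ}
    (hx : x ∈ Set.Icc 0 1) :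
    -log (1 - (1 / (n : ℝ)) * (n * x - 1 + (1 - x) ^ n))
      ≤ ∑ k ∈ range (n + 1),
          (bernsteinPolynomial ℝ n k).eval x * -log (blocksAfterMerger n k / n) := by
  have hn0 : (0 : ℝ) < n := by exact_mod_cast hn
  have hmean : 1 - (1 / (n : ℝ)) * (n * x - 1 + (1 - x) ^ n)
      = ∑ k ∈ range (n + 1), (bernsteinPolynomial ℝ n k).eval x * (blocksAfterMerger n k / n) := by
    simp_rw [← mul_div_assoc, ← sum_div, sum_bernsteinPolynomial_eval_mul_blocksAfterMerger]
    field_simp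
    ring
  have hpos : ∀ k ∈ range (n + 1), (blocksAfterMerger n k / n : ℝ) ∈ Set.Ioi 0 := by
    intro k hk
    have : 0 < blocksAfterMerger n k := by
      unfold blocksAfterMerger; have := mem_range.mp hk; omega
    exact div_pos (Nat.cast_pos.mpr this) hn0
  rw [hmean]
  exact strictConcaveOn_log_Ioi.concaveOn.neg.map_sum_le
    (fun k _ => bernsteinPolynomial_eval_nonneg n hx k) (sum_bernsteinPolynomial_eval n x) hpos

lemma neg_log_le_sum_Icc {n : ℕ} (hn : 1 ≤ n) {x : ℝ} (hx : x ∈ Set.Icc 0 1) :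
    -log (1 - (1 / (n : ℝ)) * (n * x - 1 + (1 - x) ^ n))
      ≤ ∑ k ∈ Finset.Icc 2 n,
          -log (((n - k + 1 : ℕ) : ℝ) / n) * n.choose k * x ^ k * (1 - x) ^ (n - k) := by
  have hsub : Finset.Icc 2 n ⊆ Finset.range (n + 1) := fun k hk => by
    simp only [Finset.mem_Icc, Finset.mem_range] at hk ⊢; omega
  have hnomerger : ∀ k ∈ range (n + 1), k ∉ Finset.Icc 2 n →
      (bernsteinPolynomial ℝ n k).eval x * -log (blocksAfterMerger n k / n) = 0 := by
    intro k hkr hk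
    have : blocksAfterMerger n k = n := by
      unfold blocksAfterMerger; simp only [Finset.mem_range, Finset.mem_Icc] at hkr hk; omega
    simp [this, div_self (Nat.cast_ne_zero.mpr (by omega) : (n : ℝ) ≠ 0)]
  have hmerger : ∀ k ∈ Finset.Icc 2 n,
      (bernsteinPolynomial ℝ n k).eval x * -log (blocksAfterMerger n k / n)
        = -log (((n - k + 1 : ℕ) : ℝ) / n) * n.choose k * x ^ k * (1 - x) ^ (n - k) := by
    intro k hk
    have : blocksAfterMerger n k = n - k + 1 := by
      unfold blocksAfterMerger; simp only [Finset.mem_Icc] at hk; omega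
    rw [this, bernsteinPolynomial_eval]
    ring
  calc _ ≤ _ := neg_log_le_sum_bernsteinPolynomial_eval_mul hn hx
    _ = _ := (sum_subset hsub hnomerger).symm
    _ = _ := sum_congr rfl hmerger

lemma ofReal_neg_log_div_sq_le_sum {n : ℕ} (hn : 1 ≤ n) {x : ℝ} (hx : x ∈ Set.Ioc 0 1) :
    ENNReal.ofReal ((-log (1 - (1 / (n : ℝ)) * (n * x - 1 + (1 - x) ^ n))) / x ^ 2)
      ≤ ∑ k ∈ Finset.Icc 2 n,
          ENNReal.ofReal (-log (((n - k + 1 : ℕ) : ℝ) / n)) * (n.choose k : ℝ≥0∞) *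
            ENNReal.ofReal (x ^ (k - 2) * (1 - x) ^ (n - k)) := by
  have hx0 : 0 < x := hx.1
  have hx1 : 0 ≤ 1 - x := by linarith [hx.2]
  have hlog : ∀ k ∈ Finset.Icc 2 n, 0 ≤ -log (((n - k + 1 : ℕ) : ℝ) / n) := by
    intro k hk
    refine neg_nonneg.mpr (log_nonpos (by positivity) (div_le_one_of_le₀ ?_ (Nat.cast_nonneg n)))
    simp only [Finset.mem_Icc] at hk
    exact_mod_cast (by omega : n - k + 1 ≤ n)
  have hterm : ∀ k ∈ Finset.Icc 2 n,
      ENNReal.ofReal (-log (((n - k + 1 : ℕ) : ℝ) / n)) * (n.choose k : ℝ≥0∞) *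
          ENNReal.ofReal (x ^ (k - 2) * (1 - x) ^ (n - k))
        = ENNReal.ofReal
            (-log (((n - k + 1 : ℕ) : ℝ) / n) * n.choose k * x ^ k * (1 - x) ^ (n - k) / x ^ 2) := by
    intro k hk
    have hpow : x ^ k / x ^ 2 = x ^ (k - 2) := by
      rw [div_eq_iff (by positivity), ← pow_add, Nat.sub_add_cancel (Finset.mem_Icc.mp hk).1]
    rw [← ENNReal.ofReal_natCast, ← ENNReal.ofReal_mul (hlog k hk), ← ENNReal.ofReal_mul (by
      have := hlog k hk; positivity)]
    congr 1
    rw [← hpow]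
    ring
  rw [sum_congr rfl hterm, ← ENNReal.ofReal_sum_of_nonneg fun k hk => by
    have := hlog k hk; positivity, ← sum_div]
  gcongr
  exact neg_log_le_sum_Icc hn (Set.Ioc_subset_Icc_self hx)

theorem stmt3_general (Λ : Measure ℝ)
    (n : ℕ) (hn : 2 ≤ n) :
    (∫⁻ x in Set.Ioc 0 1,
        ENNReal.ofReal ((-Real.log (1 - (1 / (n : ℝ)) * (n * x - 1 + (1 - x) ^ n))) / x ^ 2) ∂Λ)
      ≤ ∑ k ∈ Finset.Icc 2 n,
          ENNReal.ofReal (-Real.log (((n - k + 1 : ℕ) : ℝ) / n)) * (n.choose k : ℝ≥0∞) *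
            (∫⁻ x in Set.Ioc 0 1, ENNReal.ofReal (x ^ (k - 2) * (1 - x) ^ (n - k)) ∂Λ) := by
  calc _ ≤ ∫⁻ x in Set.Ioc 0 1, ∑ k ∈ Finset.Icc 2 n,
          ENNReal.ofReal (-log (((n - k + 1 : ℕ) : ℝ) / n)) * (n.choose k : ℝ≥0∞) *
            ENNReal.ofReal (x ^ (k - 2) * (1 - x) ^ (n - k)) ∂Λ :=
        setLIntegral_mono (by fun_prop) fun x hx => ofReal_neg_log_div_sq_le_sum (by omega) hx
    _ = _ := by
        rw [lintegral_finsetSum' _ fun k _ => by fun_prop]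
        exact sum_congr rfl fun k _ => lintegral_const_mul'' _ (by fun_prop)

/-- Jensen bound: `δ(n)/n ≤ ∑_{k=2}^{n} (-log((n-k+1)/n)) C(n,k) λ_{n,k}`. -/
theorem stmt3 (Λ : Measure ℝ) [IsFiniteMeasure Λ] (hsupp : Λ (Set.Ioc 0 1)ᶜ = 0)
    (n : ℕ) (hn : 2 ≤ n) :
    (∫⁻ x in Set.Ioc 0 1,
        ENNReal.ofReal ((-Real.log (1 - (1 / (n : ℝ)) * (n * x - 1 + (1 - x) ^ n))) / x ^ 2) ∂Λ)
      ≤ ∑ k ∈ Finset.Icc 2 n,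
          ENNReal.ofReal (-Real.log (((n - k + 1 : ℕ) : ℝ) / n)) * (n.choose k : ℝ≥0∞) *
            (∫⁻ x in Set.Ioc 0 1, ENNReal.ofReal (x ^ (k - 2) * (1 - x) ^ (n - k)) ∂Λ) :=
  stmt3_general Λ n hn
end

section
/- Let ℒ be the operator on functions g: ℕ → ℝ given by ℒg(n) = ∑_{k=2}^{n} C(n,k)λ_{n,k}[g(n-k+1) - g(n)] + α·n·[g(n+1) - g(n)], with α > 0 and λ_{n,k} ≥ 0. Suppose f: ℕ → ℝ≥0 is a nonnegative bounded function with ℒf = c·f for some c > 0. If f(1) = 0 then f(n) = 0 for all n ≥ 1. -/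
open Finset

/-- A nonnegative bounded solution of `ℒf = c f` with `f(1) = 0` vanishes identically. -/
theorem stmt16 (lam : ℕ → ℕ → ℝ) (hlam : ∀ n k, 0 ≤ lam n k)
    (α c : ℝ) (hα : 0 < α) (hc : 0 < c)
    (f : ℕ → ℝ) (hfpos : ∀ n, 0 ≤ f n) (hfbdd : ∃ M : ℝ, ∀ n, f n ≤ M)
    (heig : ∀ n : ℕ, 1 ≤ n →
      (∑ k ∈ Finset.Icc 2 n, (n.choose k : ℝ) * lam n k * (f (n - k + 1) - f n))
        + α * n * (f (n + 1) - f n) = c * f n)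
    (h1 : f 1 = 0) :
    ∀ n : ℕ, 1 ≤ n → f n = 0 := by
  intro n hn
  induction n using Nat.strong_induction_on with
  | _ n ih =>
    match n, hn with
    | 1, _ => exact h1
    | (m+2), _ =>
      have hIH : ∀ j, 1 ≤ j → j ≤ m + 1 → f j = 0 := fun j h1j h2j =>
        ih j (by omega) h1j
      have hm1 : 1 ≤ m + 1 := by omega
      have h := heig (m + 1) hm1
      have hfm : f (m + 1) = 0 := hIH (m + 1) hm1 le_rfl
      have hsum : ∑ k ∈ Finset.Icc 2 (m + 1),
          ((m + 1).choose k : ℝ) * lam (m + 1) k * (f (m + 1 - k + 1) - f (m + 1)) = 0 := by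
        apply Finset.sum_eq_zero
        intro k hk
        simp only [Finset.mem_Icc] at hk
        rw [hIH (m + 1 - k + 1) (by omega) (by omega), hfm]
        ring
      rw [hsum, hfm] at h
      have hpos : (0:ℝ) < α * ((m:ℝ) + 1) := by positivity
      have h2 : α * ((m:ℝ) + 1) * f (m + 1 + 1) = 0 := by push_cast at h ⊢; linarith
      have := mul_eq_zero.mp h2
      rcases this with h3 | h3
      · exact absurd h3 (ne_of_gt hpos)
      · exact h3
end

section
/- With ℒ as above (ℒg(n) = ∑_{k=2}^{n} C(n,k)λ_{n,k}[g(n-k+1)-g(n)] + αn[g(n+1)-g(n)], α > 0, λ_{n,k} ≥ 0), any nonnegative solution f of ℒf = c·f (c > 0) with f(1) > 0 is non-decreasing and satisfies f(n) ≥ ∑_{k=1}^{n-1} c·f(1)/(α·k) for all n ≥ 2; in particular f is unbounded. -/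
open Finset

/-- A nonnegative solution of `ℒf = c f` with `f(1) > 0` is non-decreasing, dominates a
harmonic sum, and is unbounded. -/
theorem stmt17 (lam : ℕ → ℕ → ℝ) (hlam : ∀ n k, 0 ≤ lam n k)
    (α c : ℝ) (hα : 0 < α) (hc : 0 < c)
    (f : ℕ → ℝ) (hfpos : ∀ n, 0 ≤ f n)
    (heig : ∀ n : ℕ, 1 ≤ n →
      (∑ k ∈ Finset.Icc 2 n, (n.choose k : ℝ) * lam n k * (f (n - k + 1) - f n))
        + α * n * (f (n + 1) - f n) = c * f n)
    (h1 : 0 < f 1) :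
    (∀ n : ℕ, 1 ≤ n → f n ≤ f (n + 1)) ∧
    (∀ n : ℕ, 2 ≤ n → ∑ k ∈ Finset.Icc 1 (n - 1), c * f 1 / (α * k) ≤ f n) ∧
    (∀ M : ℝ, ∃ n : ℕ, M < f n) := by
  -- key step
  have step : ∀ n : ℕ, 1 ≤ n → (∀ m, 1 ≤ m → m ≤ n → f m ≤ f n) →
      f n + c * f n / (α * n) ≤ f (n + 1) := by
    intro n hn hmono
    have hS : (∑ k ∈ Finset.Icc 2 n, (n.choose k : ℝ) * lam n k * (f (n - k + 1) - f n)) ≤ 0 := by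
      apply Finset.sum_nonpos
      intro k hk
      simp only [Finset.mem_Icc] at hk
      have h1k : 1 ≤ n - k + 1 := Nat.le_add_left 1 _
      have h2k : n - k + 1 ≤ n := by omega
      have := hmono (n - k + 1) h1k h2k
      have hnn : (0:ℝ) ≤ (n.choose k : ℝ) * lam n k :=
        mul_nonneg (Nat.cast_nonneg _) (hlam n k)
      nlinarith
    have heq := heig n hn
    have hαn : (0:ℝ) < α * n := by
      have : (1:ℝ) ≤ (n : ℝ) := by exact_mod_cast hn
      positivity
    have key : c * f n ≤ α * n * (f (n + 1) - f n) := by linarith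
    have h2 : c * f n / (α * n) ≤ f (n + 1) - f n :=
      (div_le_iff₀ hαn).mpr (by nlinarith [key])
    linarith
  have mono : ∀ n, ∀ m, 1 ≤ m → m ≤ n → f m ≤ f n := by
    intro n
    induction n using Nat.strong_induction_on with
    | _ n IH =>
      intro m hm hmn
      rcases eq_or_lt_of_le hmn with rfl | hlt
      · exact le_rfl
      · have hn1 : 1 ≤ n - 1 := by omega
        have hIH := IH (n - 1) (by omega)
        have hstep := step (n - 1) hn1 hIH
        have hαn : (0:ℝ) < α * ((n - 1 : ℕ) : ℝ) := by
          have : (1:ℝ) ≤ ((n - 1 : ℕ) : ℝ) := by exact_mod_cast hn1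
          positivity
        have hpos : 0 ≤ c * f (n - 1) / (α * ((n - 1 : ℕ) : ℝ)) := by
          have := hfpos (n - 1)
          positivity
        have h2 : f m ≤ f (n - 1) := hIH m hm (by omega)
        have hne : n - 1 + 1 = n := by omega
        rw [hne] at hstep
        linarith
  have incr : ∀ n : ℕ, 1 ≤ n → f n + c * f 1 / (α * n) ≤ f (n + 1) := by
    intro n hn
    have hstep := step n hn (fun m hm hmn => mono n m hm hmn)
    have hαn : (0:ℝ) < α * n := by
      have : (1:ℝ) ≤ (n : ℝ) := by exact_mod_cast hn
      positivity
    have hf1 : f 1 ≤ f n := mono n 1 le_rfl hn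
    have h2 : c * f 1 / (α * n) ≤ c * f n / (α * n) := by
      gcongr
    linarith
  have harm : ∀ n : ℕ, 2 ≤ n → ∑ k ∈ Finset.Icc 1 (n - 1), c * f 1 / (α * k) ≤ f n := by
    intro n hn
    induction n, hn using Nat.le_induction with
    | base =>
      simp only [show (2:ℕ) - 1 = 1 from rfl, Finset.Icc_self, Finset.sum_singleton,
        Nat.cast_one]
      have := incr 1 le_rfl
      linarith [h1.le]
    | succ n hn2 IH =>
      have hIH := IH
      have hstep := incr n (by omega)
      have hne : n + 1 - 1 = (n - 1) + 1 := by omega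
      rw [hne, Finset.sum_Icc_succ_top (by omega : 1 ≤ n - 1 + 1)]
      have hne2 : n - 1 + 1 = n := by omega
      rw [hne2]
      linarith
  refine ⟨fun n hn => ?_, harm, fun M => ?_⟩
  · have hstep := incr n hn
    have hαn : (0:ℝ) < α * n := by
      have : (1:ℝ) ≤ (n : ℝ) := by exact_mod_cast hn
      positivity
    have : 0 ≤ c * f 1 / (α * n) := by positivity
    linarith
  · -- unboundedness via harmonic divergence
    have hdiv : Filter.Tendsto (fun m : ℕ => ∑ k ∈ Finset.Icc 1 m, c * f 1 / (α * k))
        Filter.atTop Filter.atTop := by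
      have hbase := Real.tendsto_sum_range_one_div_nat_succ_atTop
      have hconst : Filter.Tendsto
          (fun m : ℕ => (c * f 1 / α) * ∑ i ∈ Finset.range m, (1 : ℝ) / (i + 1))
          Filter.atTop Filter.atTop := by
        apply Filter.Tendsto.const_mul_atTop (by positivity) hbase
      have heqsum : ∀ m : ℕ, (c * f 1 / α) * ∑ i ∈ Finset.range m, (1 : ℝ) / (i + 1)
          = ∑ k ∈ Finset.Icc 1 m, c * f 1 / (α * k) := by
        intro m
        rw [Finset.mul_sum, ← Finset.Ico_add_one_right_eq_Icc, Finset.sum_Ico_eq_sum_range]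
        apply Finset.sum_congr (by simp)
        intro i _
        push_cast
        rw [div_mul_div_comm, mul_one, add_comm (1:ℝ)]
      simpa only [heqsum] using hconst
    obtain ⟨m, hM, hm1⟩ :=
      ((hdiv.eventually_gt_atTop M).and (Filter.eventually_ge_atTop 1)).exists
    refine ⟨m + 1, ?_⟩
    have := harm (m + 1) (by omega)
    rw [show m + 1 - 1 = m from rfl] at this
    linarith
end
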